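/- arXiv:2004.03444 — 2 statements merged into one kernel-verified Lean document; each statement's English description precedes it below -/
import Mathlib

section
/- The function h(p) = 1 + ζ(a) − 2p − ζ(a·p) − a·p·ζ'(a·p) is strictly decreasing on [0,1]: its derivative h'(p) = −2 − 2a·ζ'(a·p) − a²·p·ζ''(a·p) is strictly negative for every p ∈ [0,1]. -/
/-!
Write `ζ = exp ∘ F` with `F x = ∑ tr(T^(k+1))/(k+1) x^(k+1)`. Nonnegativity of `T` makes every
coefficient nonnegative, so `F`, and with it `ζ`, is monotone and convex on `[0, R)`; as `ζ` is
also analytic on the ball of radius `R`, this gives `ζ' ≥ 0` and `ζ'' ≥ 0` on `[0, R)`. Since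
`a p ∈ [0, R)` for `p ∈ [0, 1]`, the derivative `h' = -2 - 2aζ'(ap) - a²pζ''(ap)` is at most `-2`.
-/

open Set

theorem monotoneOn_tsum {ι : Type*} {u : ι → ℝ → ℝ} {s : Set ℝ} (hu : ∀ i, MonotoneOn (u i) s)
    (hs : ∀ x ∈ s, Summable fun i => u i x) : MonotoneOn (fun x => ∑' i, u i x) s :=
  fun _x hx _y hy hxy => Summable.tsum_le_tsum (fun i => hu i hx hy hxy) (hs _ hx) (hs _ hy)

theorem convexOn_tsum {ι : Type*} [Nonempty ι] {u : ι → ℝ → ℝ} {s : Set ℝ}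
    (hu : ∀ i, ConvexOn ℝ s (u i)) (hs : ∀ x ∈ s, Summable fun i => u i x) :
    ConvexOn ℝ s (fun x => ∑' i, u i x) := by
  have hconv : Convex ℝ s := (hu (Classical.arbitrary ι)).1
  refine ⟨hconv, fun x hx y hy a b ha hb hab => ?_⟩
  have hsx := (hs x hx).mul_left a
  have hsy := (hs y hy).mul_left b
  calc ∑' i, u i (a • x + b • y) ≤ ∑' i, (a * u i x + b * u i y) :=
        Summable.tsum_le_tsum (fun i => (hu i).2 hx hy ha hb hab)
          (hs _ (hconv hx hy ha hb hab)) (hsx.add hsy)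
    _ = a • ∑' i, u i x + b • ∑' i, u i y := by
        rw [hsx.tsum_add hsy, tsum_mul_left, tsum_mul_left, smul_eq_mul, smul_eq_mul]

theorem analyticOnNhd_tsum_mul_pow {c : ℕ → ℝ} {R : ℝ}
    (hc : ∀ r ∈ Ioo 0 R, Summable fun k => ‖c k‖ * r ^ k) :
    AnalyticOnNhd ℝ (fun x => ∑' k, c k * x ^ k) (Metric.ball 0 R) := by
  set p := FormalMultilinearSeries.ofScalars ℝ c
  have hradius : ENNReal.ofReal R ≤ p.radius := by
    refine ENNReal.le_of_forall_pos_nnreal_lt fun r hr0 hrR => p.le_radius_of_summable ?_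
    have hrR' : (r : ℝ) < R := by
      rw [← ENNReal.ofReal_coe_nnreal] at hrR
      exact (ENNReal.ofReal_lt_ofReal_iff_of_nonneg r.2).1 hrR
    simpa [p] using hc r ⟨hr0, hrR'⟩
  intro x hx
  have hxR : edist x 0 < p.radius := (edist_lt_ofReal.2 hx).trans_le hradius
  have := (p.hasFPowerSeriesOnBall (pos_of_gt hxR)).analyticAt_of_mem
    (by simpa [Metric.mem_eball] using hxR)
  have hsum : p.sum = fun x => ∑' k, c k * x ^ k := FormalMultilinearSeries.ofScalarsSum_eq_tsum c
  rwa [hsum] at this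

theorem ConvexOn.exp {s : Set ℝ} {f : ℝ → ℝ} (hf : ConvexOn ℝ s f) :
    ConvexOn ℝ s fun x => Real.exp (f x) :=
  ⟨hf.1, fun _x hx _y hy _a _b ha hb hab =>
    (Real.exp_le_exp.2 (hf.2 hx hy ha hb hab)).trans
      (convexOn_exp.2 (mem_univ _) (mem_univ _) ha hb hab)⟩

theorem deriv_nonneg_of_monotoneOn_Ico {g : ℝ → ℝ} {a b x : ℝ} (hg : MonotoneOn g (Ico a b))
    (hx : x ∈ Ico a b) (hd : DifferentiableAt ℝ g x) : 0 ≤ deriv g x := by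
  rw [← hd.derivWithin (uniqueDiffOn_Ico a b x hx)]
  exact hg.derivWithin_nonneg

theorem deriv_deriv_nonneg_of_convexOn_Ico {g : ℝ → ℝ} {a b x : ℝ} (hg : ConvexOn ℝ (Ico a b) g)
    (hd : ∀ y ∈ Ico a b, DifferentiableAt ℝ g y) (hx : x ∈ Ico a b)
    (hd' : DifferentiableAt ℝ (deriv g) x) : 0 ≤ deriv (deriv g) x :=
  deriv_nonneg_of_monotoneOn_Ico (hg.monotoneOn_deriv hd) hx hd'

section PowSuccSeries

variable {c : ℕ → ℝ} {R : ℝ}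

theorem analyticOnNhd_tsum_mul_pow_succ (hc : ∀ k, 0 ≤ c k)
    (hs : ∀ r ∈ Ico 0 R, Summable fun k => c k * r ^ (k + 1)) :
    AnalyticOnNhd ℝ (fun x => ∑' k, c k * x ^ (k + 1)) (Metric.ball 0 R) := by
  have hfactor : (fun x => ∑' k, c k * x ^ (k + 1)) = fun x => x * ∑' k, c k * x ^ k := by
    ext x
    rw [← tsum_mul_left]
    exact tsum_congr fun k => by ring
  have hs' : ∀ r ∈ Ioo 0 R, Summable fun k => ‖c k‖ * r ^ k := fun r hr =>
    ((hs r (Ioo_subset_Ico_self hr)).div_const r).congr fun k => by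
      rw [Real.norm_of_nonneg (hc k), pow_succ]
      field_simp [hr.1.ne']
  rw [hfactor]
  exact analyticOnNhd_id.mul (analyticOnNhd_tsum_mul_pow hs')

theorem monotoneOn_tsum_mul_pow_succ (hc : ∀ k, 0 ≤ c k)
    (hs : ∀ r ∈ Ico 0 R, Summable fun k => c k * r ^ (k + 1)) :
    MonotoneOn (fun x => ∑' k, c k * x ^ (k + 1)) (Ico 0 R) :=
  monotoneOn_tsum (fun k _x hx _y _hy hxy =>
    mul_le_mul_of_nonneg_left (pow_le_pow_left₀ hx.1 hxy _) (hc k)) hs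

theorem convexOn_tsum_mul_pow_succ (hc : ∀ k, 0 ≤ c k)
    (hs : ∀ r ∈ Ico 0 R, Summable fun k => c k * r ^ (k + 1)) :
    ConvexOn ℝ (Ico 0 R) (fun x => ∑' k, c k * x ^ (k + 1)) :=
  convexOn_tsum (fun k => ((convexOn_pow (k + 1)).subset Ico_subset_Ici_self
    (convex_Ico 0 R)).smul (hc k)) hs

end PowSuccSeries

theorem hasDerivAt_sub_comp_mul_sub_mul_deriv {z : ℝ → ℝ} {a p : ℝ} (C : ℝ)
    (hz : DifferentiableAt ℝ z (a * p)) (hz' : DifferentiableAt ℝ (deriv z) (a * p)) :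
    HasDerivAt (fun q => C - 2 * q - z (a * q) - a * q * deriv z (a * q))
      (-2 - 2 * a * deriv z (a * p) - a ^ 2 * p * deriv (deriv z) (a * p)) p := by
  have hlin : HasDerivAt (fun q : ℝ => a * q) a p := by
    simpa using (hasDerivAt_id p).const_mul a
  have hz_comp : HasDerivAt (fun q => z (a * q)) (deriv z (a * p) * a) p :=
    hz.hasDerivAt.comp p hlin
  have hz'_comp : HasDerivAt (fun q => deriv z (a * q)) (deriv (deriv z) (a * p) * a) p :=
    hz'.hasDerivAt.comp p hlin
  have hdouble : HasDerivAt (fun q : ℝ => 2 * q) 2 p := by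
    simpa using (hasDerivAt_id p).const_mul 2
  exact ((((hasDerivAt_const p C).sub hdouble).sub hz_comp).sub (hlin.mul hz'_comp)).congr_deriv
    (by ring)

theorem ihara_h_strictAnti_general
    (n : ℕ) (T : Matrix (Fin n) (Fin n) ℝ)
    (hT : ∀ i j, 0 ≤ T i j)
    (R : ℝ)
    (hsum : ∀ x ∈ Set.Ico (0 : ℝ) R,
      Summable (fun k : ℕ => (T ^ (k + 1)).trace / (k + 1) * x ^ (k + 1)))
    (ζ : ℝ → ℝ)
    (hζ : ∀ x : ℝ, ζ x = Real.exp (∑' k : ℕ, (T ^ (k + 1)).trace / (k + 1) * x ^ (k + 1)))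
    (a : ℝ) (ha : a ∈ Set.Ioo (0 : ℝ) R)
    (h : ℝ → ℝ)
    (hh : ∀ p : ℝ, h p = 1 + ζ a - 2 * p - ζ (a * p) - a * p * deriv ζ (a * p)) :
    (∀ p ∈ Set.Icc (0 : ℝ) 1,
        deriv h p = -2 - 2 * a * deriv ζ (a * p) - a ^ 2 * p * deriv (deriv ζ) (a * p) ∧
          deriv h p < 0) ∧
      StrictAntiOn h (Set.Icc (0 : ℝ) 1) := by
  have hc : ∀ k : ℕ, 0 ≤ (T ^ (k + 1)).trace / (k + 1) := fun k =>
    div_nonneg (Finset.sum_nonneg fun i _ => Matrix.pow_apply_nonneg hT _ i i) k.cast_add_one_pos.le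
  have hζan : AnalyticOnNhd ℝ ζ (Metric.ball 0 R) :=
    funext hζ ▸ (analyticOnNhd_tsum_mul_pow_succ hc hsum).rexp
  have hζmono : MonotoneOn ζ (Ico 0 R) :=
    funext hζ ▸ Real.exp_monotone.comp_monotoneOn (monotoneOn_tsum_mul_pow_succ hc hsum)
  have hζconv : ConvexOn ℝ (Ico 0 R) ζ := funext hζ ▸ (convexOn_tsum_mul_pow_succ hc hsum).exp
  have hdiff : ∀ x ∈ Ico 0 R, DifferentiableAt ℝ ζ x ∧ DifferentiableAt ℝ (deriv ζ) x :=
    fun x hx => by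
      have hx' : x ∈ Metric.ball 0 R := by simpa [abs_of_nonneg hx.1] using hx.2
      exact ⟨(hζan x hx').differentiableAt, (hζan.deriv x hx').differentiableAt⟩
  have hap : ∀ p ∈ Icc (0 : ℝ) 1, a * p ∈ Ico 0 R := fun p hp =>
    ⟨mul_nonneg ha.1.le hp.1, (mul_le_of_le_one_right ha.1.le hp.2).trans_lt ha.2⟩
  have hderiv : ∀ p ∈ Icc (0 : ℝ) 1, HasDerivAt h
      (-2 - 2 * a * deriv ζ (a * p) - a ^ 2 * p * deriv (deriv ζ) (a * p)) p := fun p hp =>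
    funext hh ▸ hasDerivAt_sub_comp_mul_sub_mul_deriv _ (hdiff _ (hap p hp)).1
      (hdiff _ (hap p hp)).2
  have hneg : ∀ p ∈ Icc (0 : ℝ) 1,
      -2 - 2 * a * deriv ζ (a * p) - a ^ 2 * p * deriv (deriv ζ) (a * p) < 0 := by
    intro p hp
    have hζ' := deriv_nonneg_of_monotoneOn_Ico hζmono (hap p hp) (hdiff _ (hap p hp)).1
    have hζ'' := deriv_deriv_nonneg_of_convexOn_Ico hζconv (fun x hx => (hdiff x hx).1) (hap p hp)
      (hdiff _ (hap p hp)).2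
    nlinarith [mul_nonneg ha.1.le hζ', mul_nonneg (mul_nonneg (sq_nonneg a) hp.1) hζ'']
  refine ⟨fun p hp => ⟨(hderiv p hp).deriv, (hderiv p hp).deriv ▸ hneg p hp⟩, ?_⟩
  refine strictAntiOn_of_deriv_neg (convex_Icc 0 1)
    (fun p hp => (hderiv p hp).continuousAt.continuousWithinAt) fun p hp => ?_
  rw [interior_Icc] at hp
  exact (hderiv p (Ioo_subset_Icc_self hp)).deriv ▸ hneg p (Ioo_subset_Icc_self hp)

/-- The function h(p) = 1 + ζ(a) − 2p − ζ(a·p) − a·p·ζ'(a·p) is strictly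
decreasing on [0,1]: its derivative h'(p) = −2 − 2a·ζ'(a·p) − a²·p·ζ''(a·p) is strictly
negative for every p ∈ [0,1]. -/
theorem ihara_h_strictAnti
    (n : ℕ) (hn : 0 < n) (T : Matrix (Fin n) (Fin n) ℝ)
    (hT : ∀ i j, 0 ≤ T i j) (htr : T.trace = 0)
    (R : ℝ) (hR : 0 < R)
    (hsum : ∀ x ∈ Set.Ico (0 : ℝ) R,
      Summable (fun k : ℕ => (T ^ (k + 1)).trace / (k + 1) * x ^ (k + 1)))
    (ζ : ℝ → ℝ)
    (hζ : ∀ x : ℝ, ζ x = Real.exp (∑' k : ℕ, (T ^ (k + 1)).trace / (k + 1) * x ^ (k + 1)))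
    (a : ℝ) (ha : a ∈ Set.Ioo (0 : ℝ) R)
    (h : ℝ → ℝ)
    (hh : ∀ p : ℝ, h p = 1 + ζ a - 2 * p - ζ (a * p) - a * p * deriv ζ (a * p)) :
    (∀ p ∈ Set.Icc (0 : ℝ) 1,
        deriv h p = -2 - 2 * a * deriv ζ (a * p) - a ^ 2 * p * deriv (deriv ζ) (a * p) ∧
          deriv h p < 0) ∧
      StrictAntiOn h (Set.Icc (0 : ℝ) 1) :=
  ihara_h_strictAnti_general n T hT R hsum ζ hζ a ha h hh
end

section
/- The function h(p) = 1 + ζ(a) − 2p − ζ(a·p) − a·p·ζ'(a·p) satisfies h(0) = ζ(a) > 0 and h(1) = −1 − a·ζ'(a) < 0; consequently there exists a unique c ∈ (0,1) with h(c) = 0. -/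
/-!
Write `ζ = exp ∘ F` with `F x = ∑ cₖ x^(k+1)`, where `cₖ = tr(T^(k+1))/(k+1) ≥ 0` because `T` is
entrywise nonnegative. Then `x ζ'(x) = ζ(x) G(x)`, where `G x = ∑ (k+1) cₖ x^(k+1)` again has
nonnegative coefficients and converges on `[0, R)`. Hence `ζ(x) + x ζ'(x)` is continuous and
nondecreasing on `[0, R)`, so `h(p) = 1 + ζ(a) - 2p - (ζ + id · ζ')(a p)` is continuous and strictly
decreasing on `[0, 1]`; it goes from `h 0 = ζ a > 0` to `h 1 = -1 - a ζ'(a) < 0`, and the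
intermediate value theorem gives exactly one zero.
-/

open Set Filter Topology Real

theorem Matrix.trace_pow_nonneg {n α : Type*} [Fintype n] [DecidableEq n] [Semiring α]
    [PartialOrder α] [IsOrderedRing α] {T : Matrix n n α} (hT : ∀ i j, 0 ≤ T i j) (m : ℕ) :
    0 ≤ (T ^ m).trace :=
  Finset.sum_nonneg fun i _ => Matrix.pow_apply_nonneg hT m i i

theorem existsUnique_mem_Ioo_eq_zero_of_strictAntiOn {f : ℝ → ℝ} {a b : ℝ} (hab : a ≤ b)
    (hf : ContinuousOn f (Icc a b)) (hf_anti : StrictAntiOn f (Icc a b)) (ha : 0 < f a)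
    (hb : f b < 0) : ∃! c, c ∈ Ioo a b ∧ f c = 0 := by
  obtain ⟨c, hc, hfc⟩ := intermediate_value_Ioo' hab hf ⟨hb, ha⟩
  refine ⟨c, ⟨hc, hfc⟩, fun d ⟨hd, hfd⟩ => ?_⟩
  exact hf_anti.injOn (Ioo_subset_Icc_self hd) (Ioo_subset_Icc_self hc) (hfd.trans hfc.symm)

theorem summable_succ_mul_mul_pow_of_lt {c : ℕ → ℝ} (hc : ∀ k, 0 ≤ c k) {r s : ℝ} (hs : 0 ≤ s)
    (hsr : s < r) (hr : Summable fun k => c k * r ^ (k + 1)) :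
    Summable fun k : ℕ => (k + 1) * c k * s ^ k := by
  have hr0 : 0 < r := hs.trans_lt hsr
  have hq0 : 0 ≤ s / r := div_nonneg hs hr0.le
  have hq1 : s / r < 1 := (div_lt_one hr0).2 hsr
  have hq : Tendsto (fun k : ℕ => (k + 1) * (s / r) ^ k) atTop (𝓝 0) := by
    simpa [add_mul] using (tendsto_self_mul_const_pow_of_lt_one hq0 hq1).add
      (tendsto_pow_atTop_nhds_zero_of_lt_one hq0 hq1)
  refine hr.of_norm_bounded_eventually_nat ?_
  filter_upwards [hq.eventually (ge_mem_nhds hr0)] with k hk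
  have := hc k
  rw [Real.norm_of_nonneg (by positivity)]
  calc (k + 1) * c k * s ^ k = c k * ((k + 1) * (s / r) ^ k) * r ^ k := by
        rw [div_pow]; field_simp
    _ ≤ c k * r * r ^ k := by gcongr
    _ = c k * r ^ (k + 1) := by ring

noncomputable def succPowerSeries (c : ℕ → ℝ) (x : ℝ) : ℝ := ∑' k, c k * x ^ (k + 1)

section succPowerSeries

variable {c : ℕ → ℝ} {R : ℝ}

@[simp]
theorem succPowerSeries_zero (c : ℕ → ℝ) : succPowerSeries c 0 = 0 := by
  simp [succPowerSeries]

theorem succPowerSeries_nonneg (hc : ∀ k, 0 ≤ c k) {x : ℝ} (hx : 0 ≤ x) :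
    0 ≤ succPowerSeries c x :=
  tsum_nonneg fun k => mul_nonneg (hc k) (pow_nonneg hx _)

theorem monotoneOn_succPowerSeries (hc : ∀ k, 0 ≤ c k)
    (hsum : ∀ x ∈ Ico 0 R, Summable fun k => c k * x ^ (k + 1)) :
    MonotoneOn (succPowerSeries c) (Ico 0 R) := fun x hx y hy hxy =>
  (hsum x hx).tsum_le_tsum (fun k => by have := hc k; have := hx.1; gcongr) (hsum y hy)

theorem summable_succ_mul_mul_pow_succ (hc : ∀ k, 0 ≤ c k)
    (hsum : ∀ x ∈ Ico 0 R, Summable fun k => c k * x ^ (k + 1)) :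
    ∀ x ∈ Ico 0 R, Summable fun k : ℕ => (k + 1) * c k * x ^ (k + 1) := by
  intro x ⟨hx0, hxR⟩
  obtain ⟨r, hxr, hrR⟩ := exists_between hxR
  simpa [pow_succ, mul_assoc] using
    (summable_succ_mul_mul_pow_of_lt hc hx0 hxr (hsum r ⟨hx0.trans hxr.le, hrR⟩)).mul_right x

theorem hasDerivAt_succPowerSeries (hc : ∀ k, 0 ≤ c k)
    (hsum : ∀ x ∈ Ico 0 R, Summable fun k => c k * x ^ (k + 1)) {x : ℝ} (hx : |x| < R) :
    HasDerivAt (succPowerSeries c) (∑' k : ℕ, (k + 1) * c k * x ^ k) x := by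
  obtain ⟨r, hxr, hrR⟩ := exists_between hx
  obtain ⟨r', hrr', hr'R⟩ := exists_between hrR
  have hr : 0 < r := (abs_nonneg x).trans_lt hxr
  have hu := summable_succ_mul_mul_pow_of_lt hc hr.le hrr' (hsum r' ⟨hr.le.trans hrr'.le, hr'R⟩)
  refine hasDerivAt_tsum_of_isPreconnected hu isOpen_Ioo isPreconnected_Ioo (y₀ := 0)
    (g := fun k y => c k * y ^ (k + 1)) (g' := fun k y => (k + 1) * c k * y ^ k)
    (fun k y _ => ?_) (fun k y hy => ?_) ⟨neg_lt_zero.2 hr, hr⟩ (by simp) (abs_lt.1 hxr)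
  · exact ((hasDerivAt_pow (k + 1) y).const_mul (c k)).congr_deriv
      (by rw [Nat.add_sub_cancel]; push_cast; ring)
  · have := hc k
    rw [norm_mul, norm_pow, Real.norm_of_nonneg (by positivity)]
    gcongr
    exact abs_le.2 ⟨hy.1.le, hy.2.le⟩

theorem mul_tsum_succ_mul_mul_pow (c : ℕ → ℝ) (x : ℝ) :
    x * ∑' k : ℕ, (k + 1) * c k * x ^ k = succPowerSeries (fun k => (k + 1) * c k) x := by
  rw [← tsum_mul_left, succPowerSeries]
  congr 1 with k
  ring

theorem mul_deriv_exp_succPowerSeries (hc : ∀ k, 0 ≤ c k)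
    (hsum : ∀ x ∈ Ico 0 R, Summable fun k => c k * x ^ (k + 1)) {x : ℝ} (hx : |x| < R) :
    x * deriv (fun y => exp (succPowerSeries c y)) x =
      exp (succPowerSeries c x) * succPowerSeries (fun k => (k + 1) * c k) x := by
  rw [((hasDerivAt_succPowerSeries hc hsum hx).exp).deriv, mul_left_comm,
    mul_tsum_succ_mul_mul_pow]

theorem mul_deriv_exp_succPowerSeries_nonneg (hc : ∀ k, 0 ≤ c k)
    (hsum : ∀ x ∈ Ico 0 R, Summable fun k => c k * x ^ (k + 1)) {x : ℝ} (hx : x ∈ Ico 0 R) :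
    0 ≤ x * deriv (fun y => exp (succPowerSeries c y)) x := by
  rw [mul_deriv_exp_succPowerSeries hc hsum (by rw [abs_of_nonneg hx.1]; exact hx.2)]
  exact mul_nonneg (exp_pos _).le
    (succPowerSeries_nonneg (fun k => mul_nonneg k.cast_add_one_pos.le (hc k)) hx.1)

theorem exp_succPowerSeries_add_mul_deriv_eqOn (hc : ∀ k, 0 ≤ c k)
    (hsum : ∀ x ∈ Ico 0 R, Summable fun k => c k * x ^ (k + 1)) :
    EqOn (fun x => exp (succPowerSeries c x) + x * deriv (fun y => exp (succPowerSeries c y)) x)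
      (fun x => exp (succPowerSeries c x) * (1 + succPowerSeries (fun k => (k + 1) * c k) x))
      (Ico 0 R) := fun x hx => by
  simp only
  rw [mul_deriv_exp_succPowerSeries hc hsum (by rw [abs_of_nonneg hx.1]; exact hx.2), mul_one_add]

theorem monotoneOn_exp_succPowerSeries_add_mul_deriv (hc : ∀ k, 0 ≤ c k)
    (hsum : ∀ x ∈ Ico 0 R, Summable fun k => c k * x ^ (k + 1)) :
    MonotoneOn
      (fun x => exp (succPowerSeries c x) + x * deriv (fun y => exp (succPowerSeries c y)) x)
      (Ico 0 R) := by
  have hd (k : ℕ) : 0 ≤ (k + 1 : ℝ) * c k := mul_nonneg k.cast_add_one_pos.le (hc k)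
  refine MonotoneOn.congr ?_ (exp_succPowerSeries_add_mul_deriv_eqOn hc hsum).symm
  intro x hx y hy hxy
  have hF := monotoneOn_succPowerSeries hc hsum hx hy hxy
  have hG := monotoneOn_succPowerSeries hd (summable_succ_mul_mul_pow_succ hc hsum) hx hy hxy
  have := succPowerSeries_nonneg hd hx.1
  dsimp only
  gcongr

theorem continuousOn_exp_succPowerSeries_add_mul_deriv (hc : ∀ k, 0 ≤ c k)
    (hsum : ∀ x ∈ Ico 0 R, Summable fun k => c k * x ^ (k + 1)) :
    ContinuousOn
      (fun x => exp (succPowerSeries c x) + x * deriv (fun y => exp (succPowerSeries c y)) x)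
      (Ico 0 R) := by
  have hd (k : ℕ) : 0 ≤ (k + 1 : ℝ) * c k := mul_nonneg k.cast_add_one_pos.le (hc k)
  refine ContinuousOn.congr ?_ (exp_succPowerSeries_add_mul_deriv_eqOn hc hsum)
  intro x hx
  have hxR : |x| < R := by rw [abs_of_nonneg hx.1]; exact hx.2
  have hF := (hasDerivAt_succPowerSeries hc hsum hxR).continuousAt
  have hG :=
    (hasDerivAt_succPowerSeries hd (summable_succ_mul_mul_pow_succ hc hsum) hxR).continuousAt
  exact (hF.rexp.mul (continuousAt_const.add hG)).continuousWithinAt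

end succPowerSeries

theorem ihara_h_unique_root_general
    (n : ℕ) (T : Matrix (Fin n) (Fin n) ℝ)
    (hT : ∀ i j, 0 ≤ T i j)
    (R : ℝ)
    (hsum : ∀ x ∈ Set.Ico (0 : ℝ) R,
      Summable (fun k : ℕ => (T ^ (k + 1)).trace / (k + 1) * x ^ (k + 1)))
    (ζ : ℝ → ℝ)
    (hζ : ∀ x : ℝ, ζ x = Real.exp (∑' k : ℕ, (T ^ (k + 1)).trace / (k + 1) * x ^ (k + 1)))
    (a : ℝ) (ha : a ∈ Set.Ioo (0 : ℝ) R)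
    (h : ℝ → ℝ)
    (hh : ∀ p : ℝ, h p = 1 + ζ a - 2 * p - ζ (a * p) - a * p * deriv ζ (a * p)) :
    (h 0 = ζ a ∧ 0 < h 0) ∧ (h 1 = -1 - a * deriv ζ a ∧ h 1 < 0) ∧
      ∃! c : ℝ, c ∈ Set.Ioo (0 : ℝ) 1 ∧ h c = 0 := by
  set c : ℕ → ℝ := fun k => (T ^ (k + 1)).trace / (k + 1)
  have hc (k : ℕ) : 0 ≤ c k := div_nonneg (Matrix.trace_pow_nonneg hT _) k.cast_add_one_pos.le
  have hζ' : ζ = fun x => exp (succPowerSeries c x) := funext hζ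
  have hmaps : MapsTo (a * ·) (Icc 0 1) (Ico 0 R) := fun p hp =>
    ⟨mul_nonneg ha.1.le hp.1, (mul_le_of_le_one_right ha.1.le hp.2).trans_lt ha.2⟩
  have hmono : MonotoneOn (fun x => ζ x + x * deriv ζ x) (Ico 0 R) :=
    hζ' ▸ monotoneOn_exp_succPowerSeries_add_mul_deriv hc hsum
  have hcont : ContinuousOn (fun x => ζ x + x * deriv ζ x) (Ico 0 R) :=
    hζ' ▸ continuousOn_exp_succPowerSeries_add_mul_deriv hc hsum
  have hderiv_nonneg : 0 ≤ a * deriv ζ a :=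
    hζ' ▸ mul_deriv_exp_succPowerSeries_nonneg hc hsum ⟨ha.1.le, ha.2⟩
  have hζa_pos : 0 < ζ a := hζ' ▸ exp_pos _
  have h0 : h 0 = ζ a := by simp [hh, hζ']
  have h1 : h 1 = -1 - a * deriv ζ a := by simp only [hh, mul_one]; ring
  have h_eq : h = fun p => 1 + ζ a - 2 * p - (fun x => ζ x + x * deriv ζ x) (a * p) :=
    funext fun p => by simp only [hh]; ring
  have h_anti : StrictAntiOn h (Icc 0 1) := fun p hp q hq hpq => by
    have := hmono (hmaps hp) (hmaps hq) (mul_le_mul_of_nonneg_left hpq.le ha.1.le)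
    simp only [h_eq] at this ⊢
    linarith
  have h_cont : ContinuousOn h (Icc 0 1) := h_eq ▸
    (continuousOn_const.sub (continuousOn_const.mul continuousOn_id)).sub
      (hcont.comp (continuousOn_const.mul continuousOn_id) hmaps)
  refine ⟨⟨h0, h0 ▸ hζa_pos⟩, ⟨h1, by linarith⟩, ?_⟩
  exact existsUnique_mem_Ioo_eq_zero_of_strictAntiOn zero_le_one h_cont h_anti
    (h0 ▸ hζa_pos) (by linarith)

/-- h(0) = ζ(a) > 0 and h(1) = −1 − a·ζ'(a) < 0; consequently there is a
unique c ∈ (0,1) with h(c) = 0. -/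
theorem ihara_h_unique_root
    (n : ℕ) (hn : 0 < n) (T : Matrix (Fin n) (Fin n) ℝ)
    (hT : ∀ i j, 0 ≤ T i j) (htr : T.trace = 0)
    (R : ℝ) (hR : 0 < R)
    (hsum : ∀ x ∈ Set.Ico (0 : ℝ) R,
      Summable (fun k : ℕ => (T ^ (k + 1)).trace / (k + 1) * x ^ (k + 1)))
    (ζ : ℝ → ℝ)
    (hζ : ∀ x : ℝ, ζ x = Real.exp (∑' k : ℕ, (T ^ (k + 1)).trace / (k + 1) * x ^ (k + 1)))
    (a : ℝ) (ha : a ∈ Set.Ioo (0 : ℝ) R)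
    (h : ℝ → ℝ)
    (hh : ∀ p : ℝ, h p = 1 + ζ a - 2 * p - ζ (a * p) - a * p * deriv ζ (a * p)) :
    (h 0 = ζ a ∧ 0 < h 0) ∧ (h 1 = -1 - a * deriv ζ a ∧ h 1 < 0) ∧
      ∃! c : ℝ, c ∈ Set.Ioo (0 : ℝ) 1 ∧ h c = 0 :=
  ihara_h_unique_root_general n T hT R hsum ζ hζ a ha h hh
end
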